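/- arXiv:quant-ph/0603283 — 5 statements merged into one kernel-verified Lean document; each statement's English description precedes it below -/
import Mathlib

section
/- The partial transpose ρ₅₅^{T_B} of ρ₅₅ is positive semidefinite. -/
open Matrix ComplexOrder

noncomputable def M55 : Matrix (Fin 9) (Fin 9) ℂ :=
  !![0, 0, 0, 0, 0, 0, 0, 0, 0;
     0, 2, -1, 0, 0, 0, 0, 0, 1;
     0, -1, 1, 0, 0, 0, 0, 0, -1;
     0, 0, 0, 3, 0, -1, -1, 0, 0;
     0, 0, 0, 0, 0, 0, 0, 0, 0;
     0, 0, 0, -1, 0, 1, 1, 0, 0;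
     0, 0, 0, -1, 0, 1, 1, 0, 0;
     0, 0, 0, 0, 0, 0, 0, 2, -2;
     0, 1, -1, 0, 0, 0, 0, -2, 3]

/-- The index map `(i, j) ↦ 3 i + j` from `Fin 3 × Fin 3` to `Fin 9`. -/
def idx (p : Fin 3 × Fin 3) : Fin 9 :=
  ⟨3 * p.1.val + p.2.val, by have h1 := p.1.isLt; have h2 := p.2.isLt; omega⟩

/-- The state `ρ₅₅`, viewed as an operator on `ℂ³ ⊗ ℂ³`. -/
noncomputable def rho55 : Matrix (Fin 3 × Fin 3) (Fin 3 × Fin 3) ℂ :=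
  fun p q => (1 / 13 : ℂ) * M55 (idx p) (idx q)

/-- The partial transpose on the second factor: `(ρ^{T_B})_{(i,j),(k,l)} = ρ_{(i,l),(k,j)}`. -/
noncomputable def ptrans (ρ : Matrix (Fin 3 × Fin 3) (Fin 3 × Fin 3) ℂ) :
    Matrix (Fin 3 × Fin 3) (Fin 3 × Fin 3) ℂ :=
  fun p q => ρ (p.1, q.2) (q.1, p.2)

/-- In the basis `e_{3i+j}`, `13 ⟨x, ρ₅₅^{T_B} x⟩ = |x₁ - x₂ - x₇ + x₈|² + |x₁ + x₇ - x₈|² +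
|x₃ - x₅|² + |x₃ - x₆|² + |x₃ + x₈|²`; the rows of this matrix are the five linear forms. -/
def sosFactor : Matrix (Fin 5) (Fin 9) ℂ :=
  !![0, 1, -1, 0, 0, 0, 0, -1, 1;
     0, 1, 0, 0, 0, 0, 0, 1, -1;
     0, 0, 0, 1, 0, -1, 0, 0, 0;
     0, 0, 0, 1, 0, 0, -1, 0, 0;
     0, 0, 0, 1, 0, 0, 0, 0, 1]

lemma ptrans_rho55_eq_gram :
    ptrans rho55 = (1 / 13 : ℂ) • (sosFactorᴴ * sosFactor).submatrix idx idx := by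
  ext ⟨i, j⟩ ⟨k, l⟩
  simp only [ptrans, rho55, Matrix.smul_apply, submatrix_apply, smul_eq_mul]
  congr 1
  fin_cases i <;> fin_cases j <;> fin_cases k <;> fin_cases l <;>
    simp [M55, sosFactor, idx, mul_apply, Fin.sum_univ_five] <;> norm_num

/-- The partial transpose of `ρ₅₅` is positive semidefinite. -/
theorem rho55_ptrans_posSemidef : (ptrans rho55).PosSemidef := by
  rw [ptrans_rho55_eq_gram]
  exact ((posSemidef_conjTranspose_mul_self sosFactor).submatrix idx).smul (by positivity)
end

section
/- The partial transpose ρ₅₅^{T_B} of ρ₅₅ has rank 5. -/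
open Matrix ComplexOrder

/-!
The columns of `ρ₅₅^{T_B}` indexed by `(0,1), (0,2), (1,0), (1,2), (2,0)` span its column space:
the columns `(0,0)` and `(1,1)` vanish and the columns `(2,1)`, `(2,2)` are combinations of the
five. So the rank is at most 5. The principal `5 × 5` submatrix on these indices is `1/13` times
the block diagonal matrix with blocks `[[2,-1],[-1,1]]` and `[[3,-1,-1],[-1,1,0],[-1,0,1]]`, both
of determinant 1, so it is invertible and the rank is at least 5.
-/

namespace Matrix

variable {m n k R : Type*} [CommSemiring R] [StrongRankCondition R] [Fintype n] [Fintype k]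
  [DecidableEq k]

theorem rank_eq_card_of_eq_mul_of_isUnit_submatrix {A : Matrix m n R} {C : Matrix m k R}
    {B : Matrix k n R} (hA : A = C * B) {r : k → m} {c : k → n}
    (hS : IsUnit (A.submatrix r c)) : A.rank = Fintype.card k := by
  apply le_antisymm
  · rw [hA]
    exact (rank_mul_le_left C B).trans (rank_le_card_width C)
  · calc Fintype.card k = (A.submatrix r c).rank := (rank_of_isUnit _ hS).symm
      _ ≤ A.rank := rank_submatrix_le A r c

end Matrix

def rho55PtransPivots : Fin 5 → Fin 3 × Fin 3 := ![(0, 1), (0, 2), (1, 0), (1, 2), (2, 0)]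

noncomputable def rho55PtransCoeffs : Matrix (Fin 5) (Fin 3 × Fin 3) ℂ :=
  (!![0, 1, 0, 0, 0, 0, 0, 1, -1;
      0, 0, 1, 0, 0, 0, 0, 2, -2;
      0, 0, 0, 1, 0, 0, 0, 0, 1;
      0, 0, 0, 0, 0, 1, 0, 0, 1;
      0, 0, 0, 0, 0, 0, 1, 0, 1] : Matrix (Fin 5) (Fin 9) ℂ).submatrix id idx

lemma ptrans_rho55_eq_mul_coeffs :
    ptrans rho55 = (ptrans rho55).submatrix id rho55PtransPivots * rho55PtransCoeffs := by
  ext p q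
  simp only [mul_apply, Fin.sum_univ_five, submatrix_apply]
  fin_cases p <;> fin_cases q <;>
    simp [ptrans, rho55, M55, idx, rho55PtransPivots, rho55PtransCoeffs] <;> norm_num

lemma ptrans_rho55_submatrix_pivots_mul :
    (ptrans rho55).submatrix rho55PtransPivots rho55PtransPivots *
      !![13, 13, 0, 0, 0;
         13, 26, 0, 0, 0;
         0, 0, 13, 13, 13;
         0, 0, 13, 26, 13;
         0, 0, 13, 13, 26] = 1 := by
  ext i j
  simp only [mul_apply, Fin.sum_univ_five, submatrix_apply]
  fin_cases i <;> fin_cases j <;>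
    simp [ptrans, rho55, M55, idx, rho55PtransPivots, one_apply] <;> norm_num

/-- The partial transpose of `ρ₅₅` has rank 5. -/
theorem rho55_ptrans_rank : (ptrans rho55).rank = 5 := by
  have hunit : IsUnit ((ptrans rho55).submatrix rho55PtransPivots rho55PtransPivots) :=
    (isUnit_iff_isUnit_det _).mpr (isUnit_det_of_right_inverse ptrans_rho55_submatrix_pivots_mul)
  simpa using rank_eq_card_of_eq_mul_of_isUnit_submatrix ptrans_rho55_eq_mul_coeffs hunit
end

section
/- The range (column space) of the partial transpose ρ₅₅^{T_B} equals the 5-dimensional subspace of ℂ⁹ consisting of all vectors V = (V₀,…,V₈) satisfying V₀ = 0, V₄ = 0, V₇ = V₁ + 2V₂ and V₈ = −V₁ − 2V₂ + V₃ + V₅ + V₆; equivalently, all vectors of the form (0, A, B, C, 0, D, E, A+2B, −A−2B+C+D+E) with A, B, C, D, E ∈ ℂ. -/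
open Matrix ComplexOrder

/-! Writing out `ρ₅₅^{T_B} x` row by row, rows `(0,0)` and `(1,1)` vanish and rows `(2,1)`, `(2,2)`
are the stated combinations of the others, so the range lies in the subspace. Conversely the five
remaining rows are linearly independent, and solving them gives a preimage of every vector of the
subspace. -/

lemma ptrans_mulVec_apply (ρ : Matrix (Fin 3 × Fin 3) (Fin 3 × Fin 3) ℂ) (x : Fin 3 × Fin 3 → ℂ)
    (i j : Fin 3) :
    (ptrans ρ *ᵥ x) (i, j) = ∑ k : Fin 3, ∑ l : Fin 3, ρ (i, l) (k, j) * x (k, l) := by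
  simp only [mulVec, dotProduct, ptrans, Fintype.sum_prod_type]

lemma ptrans_rho55_mulVec (x : Fin 3 × Fin 3 → ℂ) :
    ptrans rho55 *ᵥ x = fun p => (1 / 13 : ℂ) *
      ![![0, 2 * x (0, 1) - x (0, 2), -x (0, 1) + x (0, 2) + x (2, 1) - x (2, 2)],
        ![3 * x (1, 0) - x (1, 2) - x (2, 0) + x (2, 2), 0, -x (1, 0) + x (1, 2)],
        ![-x (1, 0) + x (2, 0), x (0, 2) + 2 * x (2, 1) - 2 * x (2, 2),
          -x (0, 2) + x (1, 0) - 2 * x (2, 1) + 3 * x (2, 2)]] p.1 p.2 := by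
  ext ⟨i, j⟩
  rw [ptrans_mulVec_apply]
  fin_cases i <;> fin_cases j <;> simp [Fin.sum_univ_three, rho55, idx, M55] <;> ring

lemma ptrans_rho55_mulVec_constraints (x : Fin 3 × Fin 3 → ℂ) :
    let V := ptrans rho55 *ᵥ x
    V (0, 0) = 0 ∧ V (1, 1) = 0 ∧ V (2, 1) = V (0, 1) + 2 * V (0, 2) ∧
      V (2, 2) = -V (0, 1) - 2 * V (0, 2) + V (1, 0) + V (1, 2) + V (2, 0) := by
  simp only [ptrans_rho55_mulVec, cons_val', cons_val_zero, cons_val_one, cons_val,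
    cons_val_fin_one, mul_zero, true_and]
  constructor <;> ring

/-- The solution of rows `(0,1)`, `(0,2)`, `(1,0)`, `(1,2)`, `(2,0)` of `ρ₅₅^{T_B} x = V` with
`x (0,0) = x (1,1) = x (2,1) = x (2,2) = 0`. -/
def ptransRho55Preimage (V : Fin 3 × Fin 3 → ℂ) : Fin 3 × Fin 3 → ℂ := fun q =>
  13 * ![![0, V (0, 1) + V (0, 2), V (0, 1) + 2 * V (0, 2)],
    ![V (1, 0) + V (1, 2) + V (2, 0), 0, V (1, 0) + 2 * V (1, 2) + V (2, 0)],
    ![V (1, 0) + V (1, 2) + 2 * V (2, 0), 0, 0]] q.1 q.2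

lemma ptrans_rho55_mulVec_ptransRho55Preimage {V : Fin 3 × Fin 3 → ℂ} (h00 : V (0, 0) = 0)
    (h11 : V (1, 1) = 0) (h21 : V (2, 1) = V (0, 1) + 2 * V (0, 2))
    (h22 : V (2, 2) = -V (0, 1) - 2 * V (0, 2) + V (1, 0) + V (1, 2) + V (2, 0)) :
    ptrans rho55 *ᵥ ptransRho55Preimage V = V := by
  ext ⟨i, j⟩
  fin_cases i <;> fin_cases j <;>
    simp [ptrans_rho55_mulVec, ptransRho55Preimage, h00, h11, h21, h22] <;> ring

/-- The range of `ρ₅₅^{T_B}` consists exactly of the vectors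
`(0, A, B, C, 0, D, E, A+2B, -A-2B+C+D+E)`, i.e. those `V` with
`V₀ = 0`, `V₄ = 0`, `V₇ = V₁ + 2V₂` and `V₈ = -V₁ - 2V₂ + V₃ + V₅ + V₆`. -/
theorem rho55_ptrans_range :
    ∀ V : Fin 3 × Fin 3 → ℂ,
      V ∈ LinearMap.range (ptrans rho55).mulVecLin ↔
        (V (0, 0) = 0 ∧ V (1, 1) = 0 ∧ V (2, 1) = V (0, 1) + 2 * V (0, 2) ∧
          V (2, 2) = -V (0, 1) - 2 * V (0, 2) + V (1, 0) + V (1, 2) + V (2, 0)) := by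
  intro V
  constructor
  · rintro ⟨x, rfl⟩
    exact ptrans_rho55_mulVec_constraints x
  · rintro ⟨h00, h11, h21, h22⟩
    exact ⟨ptransRho55Preimage V, ptrans_rho55_mulVec_ptransRho55Preimage h00 h11 h21 h22⟩
end

section
/- A nonzero product vector (s,t,v)⊗(x,y,z) lies in the range of ρ₅₅ if and only if it is a nonzero scalar multiple of one of the following: (i) (1, 0, −z/(y+z)) ⊗ (0, y, z) with y + z ≠ 0; (ii) (0,0,1) ⊗ (0,1,−1); (iii) (0,1,0) ⊗ (1,0,0). -/
open Matrix ComplexOrder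

/-- The product vector `a ⊗ b ∈ ℂ³ ⊗ ℂ³`, with `(i,j)`-th component `a i * b j`. -/
def prodVec (a b : Fin 3 → ℂ) : Fin 3 × Fin 3 → ℂ := fun p => a p.1 * b p.2


section aux
lemma rv_00_00 : rho55 (0,0) (0,0) = (1/13 : ℂ) * 0 := rfl
lemma rv_00_01 : rho55 (0,0) (0,1) = (1/13 : ℂ) * 0 := rfl
lemma rv_00_02 : rho55 (0,0) (0,2) = (1/13 : ℂ) * 0 := rfl
lemma rv_00_10 : rho55 (0,0) (1,0) = (1/13 : ℂ) * 0 := rfl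
lemma rv_00_11 : rho55 (0,0) (1,1) = (1/13 : ℂ) * 0 := rfl
lemma rv_00_12 : rho55 (0,0) (1,2) = (1/13 : ℂ) * 0 := rfl
lemma rv_00_20 : rho55 (0,0) (2,0) = (1/13 : ℂ) * 0 := rfl
lemma rv_00_21 : rho55 (0,0) (2,1) = (1/13 : ℂ) * 0 := rfl
lemma rv_00_22 : rho55 (0,0) (2,2) = (1/13 : ℂ) * 0 := rfl
lemma rv_01_00 : rho55 (0,1) (0,0) = (1/13 : ℂ) * 0 := rfl
lemma rv_01_01 : rho55 (0,1) (0,1) = (1/13 : ℂ) * 2 := rfl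
lemma rv_01_02 : rho55 (0,1) (0,2) = (1/13 : ℂ) * (-1) := rfl
lemma rv_01_10 : rho55 (0,1) (1,0) = (1/13 : ℂ) * 0 := rfl
lemma rv_01_11 : rho55 (0,1) (1,1) = (1/13 : ℂ) * 0 := rfl
lemma rv_01_12 : rho55 (0,1) (1,2) = (1/13 : ℂ) * 0 := rfl
lemma rv_01_20 : rho55 (0,1) (2,0) = (1/13 : ℂ) * 0 := rfl
lemma rv_01_21 : rho55 (0,1) (2,1) = (1/13 : ℂ) * 0 := rfl
lemma rv_01_22 : rho55 (0,1) (2,2) = (1/13 : ℂ) * 1 := rfl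
lemma rv_02_00 : rho55 (0,2) (0,0) = (1/13 : ℂ) * 0 := rfl
lemma rv_02_01 : rho55 (0,2) (0,1) = (1/13 : ℂ) * (-1) := rfl
lemma rv_02_02 : rho55 (0,2) (0,2) = (1/13 : ℂ) * 1 := rfl
lemma rv_02_10 : rho55 (0,2) (1,0) = (1/13 : ℂ) * 0 := rfl
lemma rv_02_11 : rho55 (0,2) (1,1) = (1/13 : ℂ) * 0 := rfl
lemma rv_02_12 : rho55 (0,2) (1,2) = (1/13 : ℂ) * 0 := rfl
lemma rv_02_20 : rho55 (0,2) (2,0) = (1/13 : ℂ) * 0 := rfl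
lemma rv_02_21 : rho55 (0,2) (2,1) = (1/13 : ℂ) * 0 := rfl
lemma rv_02_22 : rho55 (0,2) (2,2) = (1/13 : ℂ) * (-1) := rfl
lemma rv_10_00 : rho55 (1,0) (0,0) = (1/13 : ℂ) * 0 := rfl
lemma rv_10_01 : rho55 (1,0) (0,1) = (1/13 : ℂ) * 0 := rfl
lemma rv_10_02 : rho55 (1,0) (0,2) = (1/13 : ℂ) * 0 := rfl
lemma rv_10_10 : rho55 (1,0) (1,0) = (1/13 : ℂ) * 3 := rfl
lemma rv_10_11 : rho55 (1,0) (1,1) = (1/13 : ℂ) * 0 := rfl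
lemma rv_10_12 : rho55 (1,0) (1,2) = (1/13 : ℂ) * (-1) := rfl
lemma rv_10_20 : rho55 (1,0) (2,0) = (1/13 : ℂ) * (-1) := rfl
lemma rv_10_21 : rho55 (1,0) (2,1) = (1/13 : ℂ) * 0 := rfl
lemma rv_10_22 : rho55 (1,0) (2,2) = (1/13 : ℂ) * 0 := rfl
lemma rv_11_00 : rho55 (1,1) (0,0) = (1/13 : ℂ) * 0 := rfl
lemma rv_11_01 : rho55 (1,1) (0,1) = (1/13 : ℂ) * 0 := rfl
lemma rv_11_02 : rho55 (1,1) (0,2) = (1/13 : ℂ) * 0 := rfl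
lemma rv_11_10 : rho55 (1,1) (1,0) = (1/13 : ℂ) * 0 := rfl
lemma rv_11_11 : rho55 (1,1) (1,1) = (1/13 : ℂ) * 0 := rfl
lemma rv_11_12 : rho55 (1,1) (1,2) = (1/13 : ℂ) * 0 := rfl
lemma rv_11_20 : rho55 (1,1) (2,0) = (1/13 : ℂ) * 0 := rfl
lemma rv_11_21 : rho55 (1,1) (2,1) = (1/13 : ℂ) * 0 := rfl
lemma rv_11_22 : rho55 (1,1) (2,2) = (1/13 : ℂ) * 0 := rfl
lemma rv_12_00 : rho55 (1,2) (0,0) = (1/13 : ℂ) * 0 := rfl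
lemma rv_12_01 : rho55 (1,2) (0,1) = (1/13 : ℂ) * 0 := rfl
lemma rv_12_02 : rho55 (1,2) (0,2) = (1/13 : ℂ) * 0 := rfl
lemma rv_12_10 : rho55 (1,2) (1,0) = (1/13 : ℂ) * (-1) := rfl
lemma rv_12_11 : rho55 (1,2) (1,1) = (1/13 : ℂ) * 0 := rfl
lemma rv_12_12 : rho55 (1,2) (1,2) = (1/13 : ℂ) * 1 := rfl
lemma rv_12_20 : rho55 (1,2) (2,0) = (1/13 : ℂ) * 1 := rfl
lemma rv_12_21 : rho55 (1,2) (2,1) = (1/13 : ℂ) * 0 := rfl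
lemma rv_12_22 : rho55 (1,2) (2,2) = (1/13 : ℂ) * 0 := rfl
lemma rv_20_00 : rho55 (2,0) (0,0) = (1/13 : ℂ) * 0 := rfl
lemma rv_20_01 : rho55 (2,0) (0,1) = (1/13 : ℂ) * 0 := rfl
lemma rv_20_02 : rho55 (2,0) (0,2) = (1/13 : ℂ) * 0 := rfl
lemma rv_20_10 : rho55 (2,0) (1,0) = (1/13 : ℂ) * (-1) := rfl
lemma rv_20_11 : rho55 (2,0) (1,1) = (1/13 : ℂ) * 0 := rfl
lemma rv_20_12 : rho55 (2,0) (1,2) = (1/13 : ℂ) * 1 := rfl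
lemma rv_20_20 : rho55 (2,0) (2,0) = (1/13 : ℂ) * 1 := rfl
lemma rv_20_21 : rho55 (2,0) (2,1) = (1/13 : ℂ) * 0 := rfl
lemma rv_20_22 : rho55 (2,0) (2,2) = (1/13 : ℂ) * 0 := rfl
lemma rv_21_00 : rho55 (2,1) (0,0) = (1/13 : ℂ) * 0 := rfl
lemma rv_21_01 : rho55 (2,1) (0,1) = (1/13 : ℂ) * 0 := rfl
lemma rv_21_02 : rho55 (2,1) (0,2) = (1/13 : ℂ) * 0 := rfl
lemma rv_21_10 : rho55 (2,1) (1,0) = (1/13 : ℂ) * 0 := rfl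
lemma rv_21_11 : rho55 (2,1) (1,1) = (1/13 : ℂ) * 0 := rfl
lemma rv_21_12 : rho55 (2,1) (1,2) = (1/13 : ℂ) * 0 := rfl
lemma rv_21_20 : rho55 (2,1) (2,0) = (1/13 : ℂ) * 0 := rfl
lemma rv_21_21 : rho55 (2,1) (2,1) = (1/13 : ℂ) * 2 := rfl
lemma rv_21_22 : rho55 (2,1) (2,2) = (1/13 : ℂ) * (-2) := rfl
lemma rv_22_00 : rho55 (2,2) (0,0) = (1/13 : ℂ) * 0 := rfl
lemma rv_22_01 : rho55 (2,2) (0,1) = (1/13 : ℂ) * 1 := rfl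
lemma rv_22_02 : rho55 (2,2) (0,2) = (1/13 : ℂ) * (-1) := rfl
lemma rv_22_10 : rho55 (2,2) (1,0) = (1/13 : ℂ) * 0 := rfl
lemma rv_22_11 : rho55 (2,2) (1,1) = (1/13 : ℂ) * 0 := rfl
lemma rv_22_12 : rho55 (2,2) (1,2) = (1/13 : ℂ) * 0 := rfl
lemma rv_22_20 : rho55 (2,2) (2,0) = (1/13 : ℂ) * 0 := rfl
lemma rv_22_21 : rho55 (2,2) (2,1) = (1/13 : ℂ) * (-2) := rfl
lemma rv_22_22 : rho55 (2,2) (2,2) = (1/13 : ℂ) * 3 := rfl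

/-- explicit preimage -/
noncomputable def uvec (w : Fin 3 × Fin 3 → ℂ) : Fin 3 × Fin 3 → ℂ :=
  fun p => ![![0, 13*(w (0,1) + w (0,2)), 13*(w (0,1) + 2*w (0,2))],
             ![13*(w (1,0) + w (1,2))/2, 0, 13*(w (1,0) + 3*w (1,2))/2],
             ![0, 13*(w (2,1))/2, 0]] p.1 p.2

lemma mem_range_iff (w : Fin 3 × Fin 3 → ℂ) :
    w ∈ LinearMap.range rho55.mulVecLin ↔
      (w (0,0) = 0 ∧ w (1,1) = 0 ∧ w (1,2) = w (2,0) ∧ w (0,2) + w (2,1) + w (2,2) = 0) := by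
  constructor
  · rintro ⟨u, rfl⟩
    refine ⟨?_, ?_, ?_, ?_⟩ <;> simp only [Matrix.mulVecLin_apply, Matrix.mulVec, dotProduct, Fintype.sum_prod_type, Fin.sum_univ_three, rv_00_00, rv_00_01, rv_00_02, rv_00_10, rv_00_11, rv_00_12, rv_00_20, rv_00_21, rv_00_22, rv_01_00, rv_01_01, rv_01_02, rv_01_10, rv_01_11, rv_01_12, rv_01_20, rv_01_21, rv_01_22, rv_02_00, rv_02_01, rv_02_02, rv_02_10, rv_02_11, rv_02_12, rv_02_20, rv_02_21, rv_02_22, rv_10_00, rv_10_01, rv_10_02, rv_10_10, rv_10_11, rv_10_12, rv_10_20, rv_10_21, rv_10_22, rv_11_00, rv_11_01, rv_11_02, rv_11_10, rv_11_11, rv_11_12, rv_11_20, rv_11_21, rv_11_22, rv_12_00, rv_12_01, rv_12_02, rv_12_10, rv_12_11, rv_12_12, rv_12_20, rv_12_21, rv_12_22, rv_20_00, rv_20_01, rv_20_02, rv_20_10, rv_20_11, rv_20_12, rv_20_20, rv_20_21, rv_20_22, rv_21_00, rv_21_01, rv_21_02, rv_21_10, rv_21_11, rv_21_12, rv_21_20,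 rv_21_21, rv_21_22, rv_22_00, rv_22_01, rv_22_02, rv_22_10, rv_22_11, rv_22_12, rv_22_20, rv_22_21, rv_22_22] <;> ring
  · rintro ⟨h1, h2, h3, h4⟩
    refine ⟨uvec w, ?_⟩
    have e00 : rho55.mulVecLin (uvec w) (0,0) = w (0,0) := by
      simp only [Matrix.mulVecLin_apply, Matrix.mulVec, dotProduct, Fintype.sum_prod_type, Fin.sum_univ_three, rv_00_00, rv_00_01, rv_00_02, rv_00_10, rv_00_11, rv_00_12, rv_00_20, rv_00_21, rv_00_22, rv_01_00, rv_01_01, rv_01_02, rv_01_10, rv_01_11, rv_01_12, rv_01_20, rv_01_21, rv_01_22, rv_02_00, rv_02_01, rv_02_02, rv_02_10, rv_02_11, rv_02_12, rv_02_20, rv_02_21, rv_02_22, rv_10_00, rv_10_01, rv_10_02, rv_10_10, rv_10_11, rv_10_12, rv_10_20, rv_10_21, rv_10_22, rv_11_00, rv_11_01, rv_11_02, rv_11_10, rv_11_11, rv_11_12, rv_11_20, rv_11_21, rv_11_22, rv_12_00, rv_12_01, rv_12_02, rv_12_10, rv_12_11, rv_12_12, rv_12_20, rv_12_21, rv_12_22,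 rv_20_00, rv_20_01, rv_20_02, rv_20_10, rv_20_11, rv_20_12, rv_20_20, rv_20_21, rv_20_22, rv_21_00, rv_21_01, rv_21_02, rv_21_10, rv_21_11, rv_21_12, rv_21_20, rv_21_21, rv_21_22, rv_22_00, rv_22_01, rv_22_02, rv_22_10, rv_22_11, rv_22_12, rv_22_20, rv_22_21, rv_22_22, uvec]; simp; linear_combination -h1
    have e01 : rho55.mulVecLin (uvec w) (0,1) = w (0,1) := by
      simp only [Matrix.mulVecLin_apply, Matrix.mulVec, dotProduct, Fintype.sum_prod_type, Fin.sum_univ_three, rv_00_00, rv_00_01, rv_00_02, rv_00_10, rv_00_11, rv_00_12, rv_00_20, rv_00_21, rv_00_22, rv_01_00, rv_01_01, rv_01_02, rv_01_10, rv_01_11, rv_01_12, rv_01_20, rv_01_21, rv_01_22, rv_02_00, rv_02_01, rv_02_02, rv_02_10, rv_02_11, rv_02_12, rv_02_20, rv_02_21, rv_02_22, rv_10_00, rv_10_01, rv_10_02, rv_10_10, rv_10_11, rv_10_12, rv_10_20, rv_10_21, rv_10_22, rv_11_00, rv_11_01, rv_11_02, rv_11_10, rv_11_11, rv_11_12, rv_11_20,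 rv_11_21, rv_11_22, rv_12_00, rv_12_01, rv_12_02, rv_12_10, rv_12_11, rv_12_12, rv_12_20, rv_12_21, rv_12_22, rv_20_00, rv_20_01, rv_20_02, rv_20_10, rv_20_11, rv_20_12, rv_20_20, rv_20_21, rv_20_22, rv_21_00, rv_21_01, rv_21_02, rv_21_10, rv_21_11, rv_21_12, rv_21_20, rv_21_21, rv_21_22, rv_22_00, rv_22_01, rv_22_02, rv_22_10, rv_22_11, rv_22_12, rv_22_20, rv_22_21, rv_22_22, uvec]; simp; ring
    have e02 : rho55.mulVecLin (uvec w) (0,2) = w (0,2) := by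
      simp only [Matrix.mulVecLin_apply, Matrix.mulVec, dotProduct, Fintype.sum_prod_type, Fin.sum_univ_three, rv_00_00, rv_00_01, rv_00_02, rv_00_10, rv_00_11, rv_00_12, rv_00_20, rv_00_21, rv_00_22, rv_01_00, rv_01_01, rv_01_02, rv_01_10, rv_01_11, rv_01_12, rv_01_20, rv_01_21, rv_01_22, rv_02_00, rv_02_01, rv_02_02, rv_02_10, rv_02_11, rv_02_12, rv_02_20, rv_02_21, rv_02_22, rv_10_00, rv_10_01, rv_10_02, rv_10_10, rv_10_11, rv_10_12, rv_10_20, rv_10_21, rv_10_22, rv_11_00, rv_11_01, rv_11_02, rv_11_10, rv_11_11, rv_11_12, rv_11_20, rv_11_21, rv_11_22, rv_12_00, rv_12_01, rv_12_02, rv_12_10, rv_12_11, rv_12_12, rv_12_20, rv_12_21, rv_12_22, rv_20_00, rv_20_01, rv_20_02, rv_20_10, rv_20_11, rv_20_12, rv_20_20, rv_20_21, rv_20_22, rv_21_00, rv_21_01, rv_21_02, rv_21_10, rv_21_11, rv_21_12, rv_21_20, rv_21_21, rv_21_22, rv_22_00, rv_22_01, rv_22_02, rv_22_10, rv_22_11,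 rv_22_12, rv_22_20, rv_22_21, rv_22_22, uvec]; simp; ring
    have e10 : rho55.mulVecLin (uvec w) (1,0) = w (1,0) := by
      simp only [Matrix.mulVecLin_apply, Matrix.mulVec, dotProduct, Fintype.sum_prod_type, Fin.sum_univ_three, rv_00_00, rv_00_01, rv_00_02, rv_00_10, rv_00_11, rv_00_12, rv_00_20, rv_00_21, rv_00_22, rv_01_00, rv_01_01, rv_01_02, rv_01_10, rv_01_11, rv_01_12, rv_01_20, rv_01_21, rv_01_22, rv_02_00, rv_02_01, rv_02_02, rv_02_10, rv_02_11, rv_02_12, rv_02_20, rv_02_21, rv_02_22, rv_10_00, rv_10_01, rv_10_02, rv_10_10, rv_10_11, rv_10_12, rv_10_20, rv_10_21, rv_10_22, rv_11_00, rv_11_01, rv_11_02, rv_11_10, rv_11_11, rv_11_12, rv_11_20, rv_11_21, rv_11_22, rv_12_00, rv_12_01, rv_12_02, rv_12_10, rv_12_11, rv_12_12, rv_12_20, rv_12_21, rv_12_22, rv_20_00, rv_20_01, rv_20_02, rv_20_10, rv_20_11, rv_20_12, rv_20_20, rv_20_21, rv_20_22, rv_21_00, rv_21_01, rv_21_02,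 rv_21_10, rv_21_11, rv_21_12, rv_21_20, rv_21_21, rv_21_22, rv_22_00, rv_22_01, rv_22_02, rv_22_10, rv_22_11, rv_22_12, rv_22_20, rv_22_21, rv_22_22, uvec]; simp; ring
    have e11 : rho55.mulVecLin (uvec w) (1,1) = w (1,1) := by
      simp only [Matrix.mulVecLin_apply, Matrix.mulVec, dotProduct, Fintype.sum_prod_type, Fin.sum_univ_three, rv_00_00, rv_00_01, rv_00_02, rv_00_10, rv_00_11, rv_00_12, rv_00_20, rv_00_21, rv_00_22, rv_01_00, rv_01_01, rv_01_02, rv_01_10, rv_01_11, rv_01_12, rv_01_20, rv_01_21, rv_01_22, rv_02_00, rv_02_01, rv_02_02, rv_02_10, rv_02_11, rv_02_12, rv_02_20, rv_02_21, rv_02_22, rv_10_00, rv_10_01, rv_10_02, rv_10_10, rv_10_11, rv_10_12, rv_10_20, rv_10_21, rv_10_22, rv_11_00, rv_11_01, rv_11_02, rv_11_10, rv_11_11, rv_11_12, rv_11_20, rv_11_21, rv_11_22, rv_12_00, rv_12_01, rv_12_02, rv_12_10, rv_12_11, rv_12_12, rv_12_20, rv_12_21, rv_12_22, rv_20_00,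 rv_20_01, rv_20_02, rv_20_10, rv_20_11, rv_20_12, rv_20_20, rv_20_21, rv_20_22, rv_21_00, rv_21_01, rv_21_02, rv_21_10, rv_21_11, rv_21_12, rv_21_20, rv_21_21, rv_21_22, rv_22_00, rv_22_01, rv_22_02, rv_22_10, rv_22_11, rv_22_12, rv_22_20, rv_22_21, rv_22_22, uvec]; simp; linear_combination -h2
    have e12 : rho55.mulVecLin (uvec w) (1,2) = w (1,2) := by
      simp only [Matrix.mulVecLin_apply, Matrix.mulVec, dotProduct, Fintype.sum_prod_type, Fin.sum_univ_three, rv_00_00, rv_00_01, rv_00_02, rv_00_10, rv_00_11, rv_00_12, rv_00_20, rv_00_21, rv_00_22, rv_01_00, rv_01_01, rv_01_02, rv_01_10, rv_01_11, rv_01_12, rv_01_20, rv_01_21, rv_01_22, rv_02_00, rv_02_01, rv_02_02, rv_02_10, rv_02_11, rv_02_12, rv_02_20, rv_02_21, rv_02_22, rv_10_00, rv_10_01, rv_10_02, rv_10_10, rv_10_11, rv_10_12, rv_10_20, rv_10_21, rv_10_22, rv_11_00, rv_11_01, rv_11_02, rv_11_10, rv_11_11, rv_11_12, rv_11_20, rv_11_21,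 rv_11_22, rv_12_00, rv_12_01, rv_12_02, rv_12_10, rv_12_11, rv_12_12, rv_12_20, rv_12_21, rv_12_22, rv_20_00, rv_20_01, rv_20_02, rv_20_10, rv_20_11, rv_20_12, rv_20_20, rv_20_21, rv_20_22, rv_21_00, rv_21_01, rv_21_02, rv_21_10, rv_21_11, rv_21_12, rv_21_20, rv_21_21, rv_21_22, rv_22_00, rv_22_01, rv_22_02, rv_22_10, rv_22_11, rv_22_12, rv_22_20, rv_22_21, rv_22_22, uvec]; simp; ring
    have e20 : rho55.mulVecLin (uvec w) (2,0) = w (2,0) := by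
      simp only [Matrix.mulVecLin_apply, Matrix.mulVec, dotProduct, Fintype.sum_prod_type, Fin.sum_univ_three, rv_00_00, rv_00_01, rv_00_02, rv_00_10, rv_00_11, rv_00_12, rv_00_20, rv_00_21, rv_00_22, rv_01_00, rv_01_01, rv_01_02, rv_01_10, rv_01_11, rv_01_12, rv_01_20, rv_01_21, rv_01_22, rv_02_00, rv_02_01, rv_02_02, rv_02_10, rv_02_11, rv_02_12, rv_02_20, rv_02_21, rv_02_22, rv_10_00, rv_10_01, rv_10_02, rv_10_10, rv_10_11, rv_10_12, rv_10_20, rv_10_21, rv_10_22, rv_11_00, rv_11_01, rv_11_02, rv_11_10, rv_11_11, rv_11_12, rv_11_20, rv_11_21, rv_11_22, rv_12_00, rv_12_01, rv_12_02, rv_12_10, rv_12_11, rv_12_12, rv_12_20, rv_12_21, rv_12_22, rv_20_00, rv_20_01, rv_20_02, rv_20_10, rv_20_11, rv_20_12, rv_20_20, rv_20_21, rv_20_22, rv_21_00, rv_21_01, rv_21_02, rv_21_10, rv_21_11, rv_21_12, rv_21_20, rv_21_21, rv_21_22, rv_22_00, rv_22_01, rv_22_02, rv_22_10, rv_22_11,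 rv_22_12, rv_22_20, rv_22_21, rv_22_22, uvec]; simp; linear_combination h3
    have e21 : rho55.mulVecLin (uvec w) (2,1) = w (2,1) := by
      simp only [Matrix.mulVecLin_apply, Matrix.mulVec, dotProduct, Fintype.sum_prod_type, Fin.sum_univ_three, rv_00_00, rv_00_01, rv_00_02, rv_00_10, rv_00_11, rv_00_12, rv_00_20, rv_00_21, rv_00_22, rv_01_00, rv_01_01, rv_01_02, rv_01_10, rv_01_11, rv_01_12, rv_01_20, rv_01_21, rv_01_22, rv_02_00, rv_02_01, rv_02_02, rv_02_10, rv_02_11, rv_02_12, rv_02_20, rv_02_21, rv_02_22, rv_10_00, rv_10_01, rv_10_02, rv_10_10, rv_10_11, rv_10_12, rv_10_20, rv_10_21, rv_10_22, rv_11_00, rv_11_01, rv_11_02, rv_11_10, rv_11_11, rv_11_12, rv_11_20, rv_11_21, rv_11_22, rv_12_00, rv_12_01, rv_12_02, rv_12_10, rv_12_11, rv_12_12, rv_12_20, rv_12_21, rv_12_22, rv_20_00, rv_20_01, rv_20_02, rv_20_10, rv_20_11, rv_20_12, rv_20_20, rv_20_21, rv_20_22, rv_21_00, rv_21_01, rv_21_02,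 rv_21_10, rv_21_11, rv_21_12, rv_21_20, rv_21_21, rv_21_22, rv_22_00, rv_22_01, rv_22_02, rv_22_10, rv_22_11, rv_22_12, rv_22_20, rv_22_21, rv_22_22, uvec]; simp; ring
    have e22 : rho55.mulVecLin (uvec w) (2,2) = w (2,2) := by
      simp only [Matrix.mulVecLin_apply, Matrix.mulVec, dotProduct, Fintype.sum_prod_type, Fin.sum_univ_three, rv_00_00, rv_00_01, rv_00_02, rv_00_10, rv_00_11, rv_00_12, rv_00_20, rv_00_21, rv_00_22, rv_01_00, rv_01_01, rv_01_02, rv_01_10, rv_01_11, rv_01_12, rv_01_20, rv_01_21, rv_01_22, rv_02_00, rv_02_01, rv_02_02, rv_02_10, rv_02_11, rv_02_12, rv_02_20, rv_02_21, rv_02_22, rv_10_00, rv_10_01, rv_10_02, rv_10_10, rv_10_11, rv_10_12, rv_10_20, rv_10_21, rv_10_22, rv_11_00, rv_11_01, rv_11_02, rv_11_10, rv_11_11, rv_11_12, rv_11_20, rv_11_21, rv_11_22, rv_12_00, rv_12_01, rv_12_02, rv_12_10, rv_12_11, rv_12_12, rv_12_20, rv_12_21, rv_12_22, rv_20_00,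 rv_20_01, rv_20_02, rv_20_10, rv_20_11, rv_20_12, rv_20_20, rv_20_21, rv_20_22, rv_21_00, rv_21_01, rv_21_02, rv_21_10, rv_21_11, rv_21_12, rv_21_20, rv_21_21, rv_21_22, rv_22_00, rv_22_01, rv_22_02, rv_22_10, rv_22_11, rv_22_12, rv_22_20, rv_22_21, rv_22_22, uvec]; simp; linear_combination -h4
    funext p; obtain ⟨i, j⟩ := p
    fin_cases i <;> fin_cases j
    exacts [e00, e01, e02, e10, e11, e12, e20, e21, e22]
end aux

/-- characterisation of the nonzero product vectors in the range of `ρ₅₅`. -/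
theorem rho55_range_product_vectors :
    ∀ s t v x y z : ℂ, prodVec ![s, t, v] ![x, y, z] ≠ 0 →
      (prodVec ![s, t, v] ![x, y, z] ∈ LinearMap.range rho55.mulVecLin ↔
        ((∃ c y' z' : ℂ, c ≠ 0 ∧ y' + z' ≠ 0 ∧
            prodVec ![s, t, v] ![x, y, z]
              = c • prodVec ![1, 0, -z' / (y' + z')] ![0, y', z']) ∨
         (∃ c : ℂ, c ≠ 0 ∧
            prodVec ![s, t, v] ![x, y, z] = c • prodVec ![0, 0, 1] ![0, 1, -1]) ∨
         (∃ c : ℂ, c ≠ 0 ∧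
            prodVec ![s, t, v] ![x, y, z] = c • prodVec ![0, 1, 0] ![1, 0, 0]))) := by
  intro s t v x y z hne
  have hb0 : x = 0 → y = 0 → z = 0 → False := by
    intro hx hy hz; apply hne; funext p; obtain ⟨i, j⟩ := p
    fin_cases i <;> fin_cases j <;> simp [prodVec, hx, hy, hz]
  have ha0 : s = 0 → t = 0 → v = 0 → False := by
    intro hs ht hv; apply hne; funext p; obtain ⟨i, j⟩ := p
    fin_cases i <;> fin_cases j <;> simp [prodVec, hs, ht, hv]
  constructor
  · intro hw
    obtain ⟨h1', h2', h3', h4'⟩ := (mem_range_iff _).1 hw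
    have h1 : s * x = 0 := h1'
    have h2 : t * y = 0 := h2'
    have h3 : t * z = v * x := h3'
    have h4 : s * z + v * y + v * z = 0 := h4'
    by_cases ht : t = 0
    · by_cases hs : s = 0
      · have hv : v ≠ 0 := fun hv => ha0 hs ht hv
        have hx : x = 0 := by
          have hvx : v * x = 0 := by linear_combination -h3 + z * ht
          exact (mul_eq_zero.1 hvx).resolve_left hv
        have hyz : v * (y + z) = 0 := by linear_combination h4 - z * hs
        have hz : z = -y := by
          have := (mul_eq_zero.1 hyz).resolve_left hv
          linear_combination this
        have hy : y ≠ 0 := by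
          intro hy; exact hb0 hx hy (by rw [hz, hy, neg_zero])
        refine Or.inr (Or.inl ⟨v * y, mul_ne_zero hv hy, ?_⟩)
        funext p; obtain ⟨i, j⟩ := p
        fin_cases i <;> fin_cases j <;> simp [prodVec, hs, ht, hx, hz] <;> ring
      · have hx : x = 0 := (mul_eq_zero.1 h1).resolve_left hs
        by_cases hyz : y + z = 0
        · exfalso
          have hsz : s * z = 0 := by linear_combination h4 - v * hyz
          have hz : z = 0 := (mul_eq_zero.1 hsz).resolve_left hs
          have hy : y = 0 := by linear_combination hyz - hz
          exact hb0 hx hy hz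
        · refine Or.inl ⟨s, y, z, hs, hyz, ?_⟩
          have hv : v * (y + z) = -(s * z) := by linear_combination h4
          funext p; obtain ⟨i, j⟩ := p
          fin_cases i <;> fin_cases j <;>
            simp [prodVec, ht, hx] <;>
            field_simp <;>
            first
            | linear_combination y * hv
            | linear_combination z * hv
    · have hy : y = 0 := (mul_eq_zero.1 h2).resolve_left ht
      have hx : x ≠ 0 := by
        intro hx
        have htz : t * z = 0 := by linear_combination h3 + v * hx
        exact hb0 hx hy ((mul_eq_zero.1 htz).resolve_left ht)
      have hs : s = 0 := (mul_eq_zero.1 h1).resolve_right hx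
      have hz : z = 0 := by
        by_contra hz
        have hvz : v * z = 0 := by linear_combination h4 - z * hs - v * hy
        have hv : v = 0 := (mul_eq_zero.1 hvz).resolve_right hz
        have htz : t * z = 0 := by linear_combination h3 + x * hv
        exact hz ((mul_eq_zero.1 htz).resolve_left ht)
      have hv : v = 0 := by
        have hvx : v * x = 0 := by linear_combination -h3 + t * hz
        exact (mul_eq_zero.1 hvx).resolve_right hx
      refine Or.inr (Or.inr ⟨t * x, mul_ne_zero ht hx, ?_⟩)
      funext p; obtain ⟨i, j⟩ := p
      fin_cases i <;> fin_cases j <;> simp [prodVec, hs, hv, hy, hz] <;> ring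
  · rintro (⟨c, y', z', hc, hyz, heq⟩ | ⟨c, hc, heq⟩ | ⟨c, hc, heq⟩) <;> rw [heq] <;>
      refine (mem_range_iff _).2 ⟨?_, ?_, ?_, ?_⟩ <;>
      simp [prodVec] <;> field_simp <;> ring
end

section
/- The state ρ₅₅ strongly violates the range criterion: for every nonzero product vector (s,t,v)⊗(x,y,z) in the range of ρ₅₅, the partially conjugated product vector (s,t,v)⊗(x̄,ȳ,z̄) (where x̄ denotes the complex conjugate of x) does not lie in the range of the partial transpose ρ₅₅^{T_B}. In particular ρ₅₅ is an edge state. -/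
open Matrix ComplexOrder

section aux
variable {α : Type*}
lemma cv95 (x : α) (u : Fin 8 → α) : vecCons x u (5 : Fin 9) = u 4 := rfl
lemma cv96 (x : α) (u : Fin 8 → α) : vecCons x u (6 : Fin 9) = u 5 := rfl
lemma cv97 (x : α) (u : Fin 8 → α) : vecCons x u (7 : Fin 9) = u 6 := rfl
lemma cv98 (x : α) (u : Fin 8 → α) : vecCons x u (8 : Fin 9) = u 7 := rfl
lemma cv85 (x : α) (u : Fin 7 → α) : vecCons x u (5 : Fin 8) = u 4 := rfl
lemma cv86 (x : α) (u : Fin 7 → α) : vecCons x u (6 : Fin 8) = u 5 := rfl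
lemma cv87 (x : α) (u : Fin 7 → α) : vecCons x u (7 : Fin 8) = u 6 := rfl
lemma cv75 (x : α) (u : Fin 6 → α) : vecCons x u (5 : Fin 7) = u 4 := rfl
lemma cv76 (x : α) (u : Fin 6 → α) : vecCons x u (6 : Fin 7) = u 5 := rfl
lemma cv65 (x : α) (u : Fin 5 → α) : vecCons x u (5 : Fin 6) = u 4 := rfl
end aux

lemma pz_left (a b : Fin 3 → ℂ) (h0 : a 0 = 0) (h1 : a 1 = 0) (h2 : a 2 = 0) :
    prodVec a b = 0 := by
  funext p; obtain ⟨i, j⟩ := p; fin_cases i <;> simp [prodVec, h0, h1, h2]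

lemma pz_right (a b : Fin 3 → ℂ) (h0 : b 0 = 0) (h1 : b 1 = 0) (h2 : b 2 = 0) :
    prodVec a b = 0 := by
  funext p; obtain ⟨i, j⟩ := p; fin_cases j <;> simp [prodVec, h0, h1, h2]

/-- `ρ₅₅` strongly violates the range criterion (is an edge state):
no nonzero product vector `a ⊗ b` lies in the range of `ρ₅₅` while `a ⊗ b̄`
lies in the range of `ρ₅₅^{T_B}`. -/
theorem rho55_edge :
    ∀ a b : Fin 3 → ℂ, prodVec a b ≠ 0 →
      prodVec a b ∈ LinearMap.range rho55.mulVecLin →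
      prodVec a (fun j => starRingEnd ℂ (b j)) ∉
        LinearMap.range (ptrans rho55).mulVecLin := by
  intro a b hab hr hn
  obtain ⟨c, hc⟩ := hr
  obtain ⟨d, hd⟩ := hn
  rw [Matrix.mulVecLin_apply] at hc hd
  have m00 := congrFun hc (0,0)
  have m11 := congrFun hc (1,1)
  have m02 := congrFun hc (0,2)
  have m12 := congrFun hc (1,2)
  have m20 := congrFun hc (2,0)
  have m21 := congrFun hc (2,1)
  have m22 := congrFun hc (2,2)
  have n01 := congrFun hd (0,1)
  have n02 := congrFun hd (0,2)
  have n10 := congrFun hd (1,0)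
  have n12 := congrFun hd (1,2)
  have n20 := congrFun hd (2,0)
  have n21 := congrFun hd (2,1)
  have n22 := congrFun hd (2,2)
  simp [rho55, ptrans, Matrix.mulVec, dotProduct, Fintype.sum_prod_type, Fin.sum_univ_three,
    M55, idx, prodVec, cv95, cv96, cv97, cv98, cv85, cv86, cv87, cv75, cv76, cv65]
    at m00 m11 m02 m12 m20 m21 m22 n01 n02 n10 n12 n20 n22 n21
  set B0 := starRingEnd ℂ (b 0) with hB0def
  set B1 := starRingEnd ℂ (b 1) with hB1def
  set B2 := starRingEnd ℂ (b 2) with hB2def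
  -- derived polynomial equations
  have hE3 : a 1 * b 2 = a 2 * b 0 := by linear_combination m20 - m12
  have hE4 : a 0 * b 2 + a 2 * b 1 + a 2 * b 2 = 0 := by linear_combination -m02 - m21 - m22
  have hF3 : a 0 * B1 + 2 * a 0 * B2 - a 2 * B1 = 0 := by linear_combination -n01 - 2*n02 + n21
  have hF4 : a 0 * B1 + 2 * a 0 * B2 - a 1 * B0 - a 1 * B2 - a 2 * B0 + a 2 * B2 = 0 := by
    linear_combination -n01 - 2*n02 + n10 + n12 + n20 - n22
  -- helper conversions
  have convB : ∀ j : Fin 3, starRingEnd ℂ (b j) = 0 → b j = 0 := by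
    intro j h; simpa using h
  apply hab
  rcases m00 with ha0 | hb0
  · -- a 0 = 0
    have key : a 2 * B1 = 0 := by linear_combination -hF3 + (B1 + 2*B2) * ha0
    rcases mul_eq_zero.mp key with ha2 | hB1z
    · -- a0 = a2 = 0
      have h1 : a 1 * b 2 = 0 := by linear_combination hE3 + b 0 * ha2
      rcases mul_eq_zero.mp h1 with ha1 | hb2
      · exact pz_left a b ha0 ha1 ha2
      · have hB2z : B2 = 0 := by rw [hB2def, hb2]; simp
        have h2 : a 1 * B0 = 0 := by
          linear_combination -hF4 + (B1 + 2*B2) * ha0 + (-B0 + B2) * ha2 + (-(a 1)) * hB2z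
        rcases mul_eq_zero.mp h2 with ha1 | hB0z
        · exact pz_left a b ha0 ha1 ha2
        · have hb0 : b 0 = 0 := convB 0 hB0z
          rcases m11 with ha1 | hb1
          · exact pz_left a b ha0 ha1 ha2
          · exact pz_right a b hb0 hb1 hb2
    · -- a0 = 0, b1 = 0
      have hb1 : b 1 = 0 := convB 1 hB1z
      have h3 : a 2 * b 2 = 0 := by linear_combination hE4 - b 2 * ha0 - a 2 * hb1
      rcases mul_eq_zero.mp h3 with ha2 | hb2
      · -- a0 = a2 = 0, b1 = 0
        have h4 : a 1 * b 2 = 0 := by linear_combination hE3 + b 0 * ha2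
        rcases mul_eq_zero.mp h4 with ha1 | hb2
        · exact pz_left a b ha0 ha1 ha2
        · have hB2z : B2 = 0 := by rw [hB2def, hb2]; simp
          have h5 : a 1 * B0 = 0 := by
            linear_combination -hF4 + (B1 + 2*B2) * ha0 + (-B0 + B2) * ha2 + (-(a 1)) * hB2z
          rcases mul_eq_zero.mp h5 with ha1 | hB0z
          · exact pz_left a b ha0 ha1 ha2
          · exact pz_right a b (convB 0 hB0z) hb1 hb2
      · -- a0 = 0, b1 = b2 = 0
        have h6 : a 2 * b 0 = 0 := by linear_combination -hE3 + a 1 * hb2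
        rcases mul_eq_zero.mp h6 with ha2 | hb0
        · have hB2z : B2 = 0 := by rw [hB2def, hb2]; simp
          have h7 : a 1 * B0 = 0 := by
            linear_combination -hF4 + (B1 + 2*B2) * ha0 + (-B0 + B2) * ha2 + (-(a 1)) * hB2z
          rcases mul_eq_zero.mp h7 with ha1 | hB0z
          · exact pz_left a b ha0 ha1 ha2
          · exact pz_right a b (convB 0 hB0z) hb1 hb2
        · exact pz_right a b hb0 hb1 hb2
  · -- b 0 = 0
    have hB0z : B0 = 0 := by rw [hB0def, hb0]; simp
    have h8 : a 1 * b 2 = 0 := by linear_combination hE3 + a 2 * hb0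
    rcases mul_eq_zero.mp h8 with ha1 | hb2
    · -- a1 = 0, b0 = 0
      have h9 : a 2 * (B1 + B2) = 0 := by
        linear_combination hF4 - hF3 + (B0 + B2) * ha1 + a 2 * hB0z
      rcases mul_eq_zero.mp h9 with ha2 | hBB
      · -- a1 = a2 = 0, b0 = 0
        have h10 : a 0 * (B1 + 2*B2) = 0 := by
          linear_combination hF4 + (B0 + B2) * ha1 + (B0 - B2) * ha2
        rcases mul_eq_zero.mp h10 with ha0 | hB12
        · exact pz_left a b ha0 ha1 ha2
        · have hb12 : b 1 + 2 * b 2 = 0 := by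
            have := congrArg (starRingEnd ℂ) hB12
            simpa [hB1def, hB2def, map_ofNat] using this
          have h11 : a 0 * b 2 = 0 := by linear_combination hE4 - (b 1 + b 2) * ha2
          rcases mul_eq_zero.mp h11 with ha0 | hb2
          · exact pz_left a b ha0 ha1 ha2
          · have hb1 : b 1 = 0 := by linear_combination hb12 - 2 * hb2
            exact pz_right a b hb0 hb1 hb2
      · -- a1 = 0, b0 = 0, B1 + B2 = 0
        have hb12 : b 1 + b 2 = 0 := by
          have := congrArg (starRingEnd ℂ) hBB
          simpa [hB1def, hB2def, map_ofNat] using this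
        have h12 : a 0 * b 2 = 0 := by linear_combination hE4 - a 2 * hb12
        rcases mul_eq_zero.mp h12 with ha0 | hb2
        · -- a0 = a1 = 0
          have h13 : a 2 * B1 = 0 := by linear_combination -hF3 + (B1 + 2*B2) * ha0
          rcases mul_eq_zero.mp h13 with ha2 | hB1z
          · exact pz_left a b ha0 ha1 ha2
          · have hb1 : b 1 = 0 := convB 1 hB1z
            have hb2 : b 2 = 0 := by linear_combination hb12 - hb1
            exact pz_right a b hb0 hb1 hb2
        · have hb1 : b 1 = 0 := by linear_combination hb12 - hb2
          exact pz_right a b hb0 hb1 hb2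
    · -- b0 = b2 = 0
      rcases m11 with ha1 | hb1
      · have h14 : a 2 * b 1 = 0 := by linear_combination hE4 - (a 0 + a 2) * hb2
        rcases mul_eq_zero.mp h14 with ha2 | hb1
        · -- a1 = a2 = 0, b0 = b2 = 0
          have hB2z : B2 = 0 := by rw [hB2def, hb2]; simp
          have h15 : a 0 * B1 = 0 := by
            linear_combination hF3 + (-2 * a 0) * hB2z + B1 * ha2
          rcases mul_eq_zero.mp h15 with ha0 | hB1z
          · exact pz_left a b ha0 ha1 ha2
          · exact pz_right a b hb0 (convB 1 hB1z) hb2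
        · exact pz_right a b hb0 hb1 hb2
      · exact pz_right a b hb0 hb1 hb2
end
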